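/- arXiv:1406.6771 — 7 statements merged into one kernel-verified Lean document; each statement's English description precedes it below -/
import Mathlib

section
/- For every integer k with 1 ≤ k ≤ n, the element u_k = a^k + (a-1)bâ is a unit of the group ring 𝕂G, with inverse a^{-k} - a^{-k}(a-1)bâ. If moreover gcd(k,n) = 1, then u_k has order exactly n in U(𝕂G). -/
/-!
Write `N = (a - 1) b â` in `𝕂G`. Since `â (a - 1) = a ^ n - 1 = 0`, `N` is square-zero and
is absorbed on the right by powers of `a`; expanding then shows that `a ^ (-k) - a ^ (-k) N`
inverts `u_k = a ^ k + N` and that `u_k ^ m = a ^ (k m) + (∑_{j < m} a ^ (k j)) N`.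
When `gcd(k, n) = 1`, `j ↦ k j` permutes `ℤ/n`, so for `m = n` the sum is `â`, and `â N = 0`
gives `u_k ^ n = 1`. Conversely, if `u_k ^ m = 1` then `a ^ (k m) = 1 - (∑_{j < m} a ^ (k j)) N`,
where the last term is supported on the double coset `⟨a⟩ b ⟨a⟩`, disjoint from `⟨a⟩` because
`b ∉ ⟨a⟩`. Comparing coefficients at `a ^ (k m)` gives `a ^ (k m) = 1`, so `n ∣ k m`, `n ∣ m`.
-/

open Finset MonoidAlgebra

section Ring
variable {R : Type*} [Ring R]

theorem add_mul_sub_mul_eq_one {p q N : R} (hpq : p * q = 1) (hNq : N * q = N)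
    (hN : N * N = 0) : (p + N) * (q - q * N) = 1 := by
  calc (p + N) * (q - q * N) = p * q - p * q * N + N * q - N * q * N := by noncomm_ring
    _ = 1 := by simp [hpq, hNq, hN]

theorem sub_mul_mul_add_eq_one {p q N : R} (hqp : q * p = 1) (hNp : N * p = N)
    (hN : N * N = 0) : (q - q * N) * (p + N) = 1 := by
  calc (q - q * N) * (p + N) = q * p + q * N - q * (N * p) - q * (N * N) := by noncomm_ring
    _ = 1 := by simp [hqp, hNp, hN]

theorem add_pow_of_mul_eq_self_of_mul_self_eq_zero {p N : R} (hNp : N * p = N)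
    (hN : N * N = 0) (m : ℕ) : (p + N) ^ m = p ^ m + (∑ j ∈ range m, p ^ j) * N := by
  induction m with
  | zero => simp
  | succ m ih =>
    rw [pow_succ, ih, sum_range_succ]
    calc (p ^ m + (∑ j ∈ range m, p ^ j) * N) * (p + N)
        = p ^ m * p + (∑ j ∈ range m, p ^ j) * (N * p) + p ^ m * N
          + (∑ j ∈ range m, p ^ j) * (N * N) := by noncomm_ring
      _ = _ := by rw [hNp, hN, ← pow_succ]; noncomm_ring

variable {x s : R}

theorem mul_pow_eq_self_of_mul_sub_one_eq_zero (hs : s * (x - 1) = 0) (m : ℕ) :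
    s * x ^ m = s := by
  induction m with
  | zero => simp
  | succ m ih => rw [pow_succ, ← mul_assoc, ih, ← sub_eq_zero, ← mul_sub_one, hs]

theorem sub_one_mul_mul_mul_self_eq_zero (hs : s * (x - 1) = 0) (y : R) :
    (x - 1) * y * s * ((x - 1) * y * s) = 0 := by
  rw [show (x - 1) * y * s * ((x - 1) * y * s) = (x - 1) * y * (s * (x - 1)) * (y * s) by
    noncomm_ring, hs, mul_zero, zero_mul]

end Ring

theorem sum_range_pow_pow_eq_of_coprime {R : Type*} [Semiring R] {x : R} {n k : ℕ}
    (hx : x ^ n = 1) (hk : k.Coprime n) :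
    ∑ j ∈ range n, (x ^ k) ^ j = ∑ j ∈ range n, x ^ j := by
  rcases eq_zero_or_neZero n with rfl | _
  · simp
  have sum_range_eq (c : ZMod n) :
      ∑ j ∈ range n, x ^ (c * j).val = ∑ i : ZMod n, x ^ (c * i).val :=
    sum_nbij' (↑) ZMod.val (by simp) (by simp [ZMod.val_lt])
      (fun _ hj ↦ ZMod.val_cast_of_lt (mem_range.mp hj)) (by simp) (by simp)
  have val_cast (m : ℕ) : x ^ (m : ZMod n).val = x ^ m := by
    rw [ZMod.val_natCast, ← pow_eq_pow_mod m hx]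
  calc ∑ j ∈ range n, (x ^ k) ^ j = ∑ j ∈ range n, x ^ ((k : ZMod n) * j).val := by
        simp only [← Nat.cast_mul, val_cast, pow_mul]
    _ = ∑ i : ZMod n, x ^ i.val := by
        rw [sum_range_eq]
        exact Equiv.sum_comp (ZMod.unitOfCoprime k hk).mulLeft fun i : ZMod n ↦ x ^ i.val
    _ = ∑ j ∈ range n, x ^ j := by simpa only [one_mul, val_cast] using (sum_range_eq 1).symm

namespace MonoidAlgebra

section Supported
variable {R G : Type*} [CommSemiring R] [Monoid G]

noncomputable def supportedSubalgebra (S : Submonoid G) : Subalgebra R (MonoidAlgebra R G) :=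
  (supported R R (S : Set G)).toSubalgebra
    (mem_supported.mpr <| (coe_subset.mpr support_coeff_one_subset).trans <| by simp)
    (fun x y hx hy ↦ by
      classical
      refine mem_supported.mpr <| (coe_subset.mpr (support_coeff_mul_subset x y)).trans ?_
      rw [coe_mul]
      exact Set.mul_subset_iff.mpr fun a ha b hb ↦
        S.mul_mem (mem_supported.mp hx ha) (mem_supported.mp hy hb))

theorem mem_supportedSubalgebra {S : Submonoid G} {x : MonoidAlgebra R G} :
    x ∈ supportedSubalgebra S ↔ ↑x.coeff.support ⊆ (S : Set G) := mem_supported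

theorem of_mem_supportedSubalgebra {S : Submonoid G} {g : G} (hg : g ∈ S) :
    of R G g ∈ supportedSubalgebra S :=
  mem_supportedSubalgebra.mpr <|
    (coe_subset.mpr Finsupp.support_single_subset).trans (by simpa using hg)

end Supported

section Group
variable {R G : Type*} [CommSemiring R] [Group G]

theorem coeff_mul_of_mul_eq_zero {H : Subgroup G} {x y : MonoidAlgebra R G}
    (hx : x ∈ supportedSubalgebra H.toSubmonoid) (hy : y ∈ supportedSubalgebra H.toSubmonoid)
    {b g : G} (hb : b ∉ H) (hg : g ∈ H) : (x * of R G b * y).coeff g = 0 := by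
  rw [coeff_mul_apply_right]
  refine Finset.sum_eq_zero fun h hh ↦ ?_
  have hxh : g * h⁻¹ * b⁻¹ ∉ H := fun hmem ↦ hb <| by
    have := H.mul_mem (H.inv_mem hmem)
      (H.mul_mem hg (H.inv_mem (mem_supportedSubalgebra.mp hy hh)))
    rwa [show (g * h⁻¹ * b⁻¹)⁻¹ * (g * h⁻¹) = b by group] at this
  dsimp only
  rw [of_apply, coeff_mul_single_apply,
    Finsupp.notMem_support_iff.mp fun hm ↦ hxh (mem_supportedSubalgebra.mp hx hm),
    zero_mul, zero_mul]

theorem eq_one_of_of_add_mul_of_mul_eq_one [Nontrivial R] {H : Subgroup G}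
    {x y : MonoidAlgebra R G}
    (hx : x ∈ supportedSubalgebra H.toSubmonoid) (hy : y ∈ supportedSubalgebra H.toSubmonoid)
    {b g : G} (hb : b ∉ H) (hg : g ∈ H) (h : of R G g + x * of R G b * y = 1) : g = 1 := by
  classical
  have hcoeff := congrArg (fun z : MonoidAlgebra R G ↦ z.coeff g) h
  rw [coeff_add, Finsupp.add_apply, coeff_mul_of_mul_eq_zero hx hy hb hg, add_zero] at hcoeff
  simp only [of_apply, coeff_single, Finsupp.single_eq_same, one_def, Finsupp.single_apply] at hcoeff
  by_contra hg1
  rw [if_neg (Ne.symm hg1)] at hcoeff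
  exact one_ne_zero hcoeff

end Group

theorem orderOf_unit_eq_orderOf {𝕂 G : Type*} [CommRing 𝕂] [Nontrivial 𝕂] [Group G] {a b : G}
    (hb : b ∉ Subgroup.zpowers a) {k : ℕ} (hk : k.Coprime (orderOf a)) (u : (MonoidAlgebra 𝕂 G)ˣ)
    (hu : (u : MonoidAlgebra 𝕂 G) = of 𝕂 G a ^ k +
      (of 𝕂 G a - 1) * of 𝕂 G b * ∑ i ∈ range (orderOf a), of 𝕂 G a ^ i) :
    orderOf u = orderOf a := by
  set A := of 𝕂 G a
  set s := ∑ i ∈ range (orderOf a), A ^ i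
  have hAn : A ^ orderOf a = 1 := by rw [← map_pow, pow_orderOf_eq_one, map_one]
  have hs : s * (A - 1) = 0 := by rw [geom_sum_mul, hAn, sub_self]
  have hpow (m : ℕ) : ((u ^ m : (MonoidAlgebra 𝕂 G)ˣ) : MonoidAlgebra 𝕂 G) =
      (A ^ k) ^ m + (∑ j ∈ range m, (A ^ k) ^ j) * ((A - 1) * of 𝕂 G b * s) := by
    rw [Units.val_pow_eq_pow_val, hu]
    exact add_pow_of_mul_eq_self_of_mul_self_eq_zero
      (by rw [mul_assoc, mul_pow_eq_self_of_mul_sub_one_eq_zero hs])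
      (sub_one_mul_mul_mul_self_eq_zero hs _) m
  have hA : A ∈ supportedSubalgebra (Subgroup.zpowers a).toSubmonoid :=
    of_mem_supportedSubalgebra (Subgroup.mem_zpowers a)
  refine Nat.dvd_antisymm (orderOf_dvd_of_pow_eq_one <| Units.ext ?_) ?_
  · rw [hpow, ← pow_mul, mul_comm, pow_mul, hAn, one_pow,
      sum_range_pow_pow_eq_of_coprime hAn hk, ← mul_assoc, ← mul_assoc, hs, zero_mul, zero_mul, add_zero, Units.val_one]
  · refine hk.symm.dvd_of_dvd_mul_left (orderOf_dvd_of_pow_eq_one ?_)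
    have hu1 := hpow (orderOf u)
    rw [pow_orderOf_eq_one, Units.val_one, ← pow_mul, ← map_pow, ← mul_assoc, ← mul_assoc]
      at hu1
    refine eq_one_of_of_add_mul_of_mul_eq_one ?_ ?_ hb
      (Subgroup.pow_mem _ (Subgroup.mem_zpowers a) _) hu1.symm
    · exact Subalgebra.mul_mem _ (Subalgebra.sum_mem _ fun j _ ↦ pow_mem (pow_mem hA _) _)
        (Subalgebra.sub_mem _ hA (Subalgebra.one_mem _))
    · exact Subalgebra.sum_mem _ fun i _ ↦ pow_mem hA _

end MonoidAlgebra

theorem stmt_9_general {𝕂 : Type*} [CommRing 𝕂] [IsDomain 𝕂]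
    {G : Type*} [Group G] (a b : G) (n : ℕ) (ha : orderOf a = n)
    (hb : b ∉ Subgroup.normalizer (Subgroup.zpowers a))
    (ahat : MonoidAlgebra 𝕂 G)
    (hahat : ahat = ∑ i ∈ Finset.range n, (MonoidAlgebra.of 𝕂 G a) ^ i)
    (k : ℕ) :
    (MonoidAlgebra.of 𝕂 G a ^ k + (MonoidAlgebra.of 𝕂 G a - 1) * MonoidAlgebra.of 𝕂 G b * ahat) *
        (MonoidAlgebra.of 𝕂 G (a ^ (-(k : ℤ))) - MonoidAlgebra.of 𝕂 G (a ^ (-(k : ℤ))) * ((MonoidAlgebra.of 𝕂 G a - 1) * MonoidAlgebra.of 𝕂 G b * ahat)) = 1 ∧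
    (MonoidAlgebra.of 𝕂 G (a ^ (-(k : ℤ))) - MonoidAlgebra.of 𝕂 G (a ^ (-(k : ℤ))) * ((MonoidAlgebra.of 𝕂 G a - 1) * MonoidAlgebra.of 𝕂 G b * ahat)) *
        (MonoidAlgebra.of 𝕂 G a ^ k + (MonoidAlgebra.of 𝕂 G a - 1) * MonoidAlgebra.of 𝕂 G b * ahat) = 1 ∧
    (Nat.gcd k n = 1 →
      ∀ u : (MonoidAlgebra 𝕂 G)ˣ,
        (u : MonoidAlgebra 𝕂 G) = MonoidAlgebra.of 𝕂 G a ^ k + (MonoidAlgebra.of 𝕂 G a - 1) * MonoidAlgebra.of 𝕂 G b * ahat →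
        orderOf u = n) := by
  subst ha hahat
  set A := of 𝕂 G a
  set s := ∑ i ∈ range (orderOf a), A ^ i
  set q := of 𝕂 G (a ^ (-(k : ℤ)))
  have hs : s * (A - 1) = 0 := by
    rw [geom_sum_mul, ← map_pow, pow_orderOf_eq_one, map_one, sub_self]
  have hsA : s * A ^ k = s := mul_pow_eq_self_of_mul_sub_one_eq_zero hs k
  have hpq : A ^ k * q = 1 := by
    rw [← map_pow, ← map_mul, zpow_neg, zpow_natCast, mul_inv_cancel, map_one]
  have hqp : q * A ^ k = 1 := by
    rw [← map_pow, ← map_mul, zpow_neg, zpow_natCast, inv_mul_cancel, map_one]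
  have hsq : s * q = s := by
    conv_lhs => rw [← hsA]
    rw [mul_assoc, hpq, mul_one]
  have hN := sub_one_mul_mul_mul_self_eq_zero hs (of 𝕂 G b)
  refine ⟨add_mul_sub_mul_eq_one hpq (by rw [mul_assoc, hsq]) hN,
    sub_mul_mul_add_eq_one hqp (by rw [mul_assoc, hsA]) hN,
    fun hk u hu ↦ orderOf_unit_eq_orderOf (fun hb' ↦ hb (Subgroup.le_normalizer hb')) hk u hu⟩

theorem stmt_9 {𝕂 : Type*} [CommRing 𝕂] [IsDomain 𝕂]
    {G : Type*} [Group G] (a b : G) (n : ℕ) (hn : 2 ≤ n) (ha : orderOf a = n)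
    (hA : ¬ (Subgroup.zpowers a).Normal)
    (hb : b ∉ Subgroup.normalizer (Subgroup.zpowers a))
    (ahat : MonoidAlgebra 𝕂 G)
    (hahat : ahat = ∑ i ∈ Finset.range n, (MonoidAlgebra.of 𝕂 G a) ^ i)
    (k : ℕ) (hk1 : 1 ≤ k) (hkn : k ≤ n) :
    (MonoidAlgebra.of 𝕂 G a ^ k + (MonoidAlgebra.of 𝕂 G a - 1) * MonoidAlgebra.of 𝕂 G b * ahat) *
        (MonoidAlgebra.of 𝕂 G (a ^ (-(k : ℤ))) - MonoidAlgebra.of 𝕂 G (a ^ (-(k : ℤ))) * ((MonoidAlgebra.of 𝕂 G a - 1) * MonoidAlgebra.of 𝕂 G b * ahat)) = 1 ∧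
    (MonoidAlgebra.of 𝕂 G (a ^ (-(k : ℤ))) - MonoidAlgebra.of 𝕂 G (a ^ (-(k : ℤ))) * ((MonoidAlgebra.of 𝕂 G a - 1) * MonoidAlgebra.of 𝕂 G b * ahat)) *
        (MonoidAlgebra.of 𝕂 G a ^ k + (MonoidAlgebra.of 𝕂 G a - 1) * MonoidAlgebra.of 𝕂 G b * ahat) = 1 ∧
    (Nat.gcd k n = 1 →
      ∀ u : (MonoidAlgebra 𝕂 G)ˣ,
        (u : MonoidAlgebra 𝕂 G) = MonoidAlgebra.of 𝕂 G a ^ k + (MonoidAlgebra.of 𝕂 G a - 1) * MonoidAlgebra.of 𝕂 G b * ahat →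
        orderOf u = n) :=
  stmt_9_general a b n ha hb ahat hahat k
end

section
/- Suppose 𝕂 has characteristic zero. Let k be an integer with 1 ≤ k ≤ n and gcd(k,n) ≠ 1. If gcd(k,M) ≠ 1 or M = n, then the unit u_k = a^k + (a-1)bâ has infinite order in U(𝕂G). -/
/-!
Put `d = gcd(k, M) ≥ 2`. The integers `t` with `b⁻¹ aᵗ b ∈ ⟨a⟩` form a subgroup `sℤ` of `ℤ`;
conjugation by `b` preserves orders, which forces `b` to normalise `⟨aˢ⟩`, so minimality of `M`
gives `s = M`. Hence if `aʲ b aⁱ = aʲ' b aⁱ'` then `M ∣ j - j'`, and "`d ∣ j`" is a well-defined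
property of elements `aʲ b aⁱ` of the double coset `⟨a⟩b⟨a⟩`; let `S` be the set where it holds.

Writing `v = (a - 1) b â`, we have `v a = v` and `v² = 0` because `â (a - 1) = aⁿ - 1 = 0`, so
`u^m = a^{km} + (∑_{p<m} a^{kp}) v`. The functional summing the coefficients over `S` kills every
power of `a` (as `b ∉ ⟨a⟩`) and sends each `a^{kp} v = ∑_{j<n} (a^{kp+1} b aʲ - a^{kp} b aʲ)`
to `-n`. So `u^m = 1` would give `m n = 0` in `𝕂`, impossible in characteristic zero.
-/

open Finset Subgroup MonoidAlgebra

section ConjExponents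

variable {G : Type*} [Group G]

theorem inv_mul_zpow_mul (b x : G) (l : ℤ) : b⁻¹ * x ^ l * b = (b⁻¹ * x * b) ^ l := by
  simpa using (conj_zpow (a := b⁻¹) (b := x) (i := l)).symm

def conjExponents (a b : G) : AddSubgroup ℤ where
  carrier := {t | b⁻¹ * a ^ t * b ∈ zpowers a}
  zero_mem' := by simp
  add_mem' {x y} hx hy := by
    rw [Set.mem_ofPred_eq, zpow_add, show b⁻¹ * (a ^ x * a ^ y) * b =
      (b⁻¹ * a ^ x * b) * (b⁻¹ * a ^ y * b) by group]
    exact mul_mem hx hy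
  neg_mem' {x} hx := by
    rw [Set.mem_ofPred_eq, inv_mul_zpow_mul, zpow_neg, ← inv_mul_zpow_mul]
    exact inv_mem hx

theorem mem_conjExponents {a b : G} {t : ℤ} :
    t ∈ conjExponents a b ↔ b⁻¹ * a ^ t * b ∈ zpowers a :=
  Iff.rfl

theorem exists_mem_conjExponents_iff_dvd (a b : G) :
    ∃ s : ℕ, ∀ t : ℤ, t ∈ conjExponents a b ↔ (s : ℤ) ∣ t := by
  obtain ⟨g, hg⟩ := Int.subgroup_cyclic (conjExponents a b)
  refine ⟨g.natAbs, fun t => ?_⟩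
  rw [hg, ← AddSubgroup.zmultiples_eq_closure, Int.mem_zmultiples_iff, Int.natAbs_dvd]

theorem inv_mul_pow_mul_mem_zpowers_of_mem_normalizer {a b : G} {M : ℕ}
    (hb : b ∈ normalizer (zpowers (a ^ M) : Set G)) : b⁻¹ * a ^ M * b ∈ zpowers a :=
  zpowers_le.2 (pow_mem (mem_zpowers a) M) <|
    (mem_normalizer_iff''.1 hb _).1 (mem_zpowers _)

theorem mem_normalizer_zpowers_pow_of_conjExponents {a b : G} (ha : IsOfFinOrder a) {s : ℕ}
    (hs : ∀ t : ℤ, t ∈ conjExponents a b ↔ (s : ℤ) ∣ t) :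
    b ∈ normalizer (zpowers (a ^ s) : Set G) := by
  obtain ⟨w, hw⟩ := mem_zpowers_iff.1 ((hs s).2 dvd_rfl)
  obtain ⟨r, hr⟩ : s ∣ orderOf a := by
    exact_mod_cast (hs (orderOf a)).1 (by simp [mem_conjExponents, pow_orderOf_eq_one])
  have hr0 : (r : ℤ) ≠ 0 :=
    Int.natCast_ne_zero.2 (right_ne_zero_of_mul (hr ▸ ha.orderOf_pos.ne'))
  -- `(a ^ w) ^ r` is conjugate to `a ^ (s * r) = 1`, so `s * r ∣ w * r`
  have hsw : (s : ℤ) ∣ w := by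
    have hwr : a ^ (w * r) = 1 := by
      rw [zpow_mul, hw, ← inv_mul_zpow_mul, ← zpow_mul, ← Int.natCast_mul, ← hr]
      simp [pow_orderOf_eq_one]
    refine Int.dvd_of_mul_dvd_mul_right hr0 ?_
    exact_mod_cast hr ▸ orderOf_dvd_iff_zpow_eq_one.2 hwr
  obtain ⟨q, rfl⟩ := hsw
  have : Finite (zpowers (a ^ s) : Set G) := (finite_zpowers.2 ha.pow).to_subtype
  refine inv_mem_iff.1 (mem_normalizer_fintype fun x hx => ?_)
  obtain ⟨l, rfl⟩ := mem_zpowers_iff.1 hx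
  refine mem_zpowers_iff.2 ⟨q * l, ?_⟩
  rw [inv_inv, inv_mul_zpow_mul, ← zpow_natCast, ← hw, zpow_mul, zpow_mul]

theorem dvd_of_inv_mul_zpow_mul_mem_zpowers {a b : G} (ha : IsOfFinOrder a)
    (hb : b ∉ normalizer (zpowers a : Set G)) {M : ℕ} (hM : 0 < M)
    (hMmem : b ∈ normalizer (zpowers (a ^ M) : Set G))
    (hMmin : ∀ m : ℕ, 2 ≤ m → m < M → b ∉ normalizer (zpowers (a ^ m) : Set G))
    {t : ℤ} (ht : b⁻¹ * a ^ t * b ∈ zpowers a) : (M : ℤ) ∣ t := by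
  obtain ⟨s, hs⟩ := exists_mem_conjExponents_iff_dvd a b
  have hsM : s ∣ M := by
    exact_mod_cast (hs M).1 (by
      simpa [mem_conjExponents] using inv_mul_pow_mul_mem_zpowers_of_mem_normalizer hMmem)
  have hbs := mem_normalizer_zpowers_pow_of_conjExponents ha hs
  have hs2 : 2 ≤ s := by
    have hs1 : s ≠ 1 := by
      rintro rfl
      exact hb (by simpa using hbs)
    have := Nat.pos_of_dvd_of_pos hsM hM
    omega
  have hsM' : s = M := le_antisymm (Nat.le_of_dvd hM hsM) (not_lt.1 fun h => hMmin s hs2 h hbs)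
  exact hsM' ▸ (hs t).1 ht

end ConjExponents

section PowFormula

variable {R : Type*} [Ring R]

theorem add_pow_eq_of_mul_eq_self_of_mul_self_eq_zero {x v : R} (hvx : v * x = v)
    (hvv : v * v = 0) (t : ℕ) : (x + v) ^ t = x ^ t + (∑ p ∈ range t, x ^ p) * v := by
  induction t with
  | zero => simp
  | succ t ih =>
    rw [pow_succ, ih, sum_range_succ]
    calc (x ^ t + (∑ p ∈ range t, x ^ p) * v) * (x + v)
        = x ^ t * x + x ^ t * v + (∑ p ∈ range t, x ^ p) * (v * x)
          + (∑ p ∈ range t, x ^ p) * (v * v) := by noncomm_ring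
      _ = _ := by rw [hvx, hvv, pow_succ]; noncomm_ring

theorem geom_sum_mul_pow_eq_self {x : R} {n : ℕ} (hx : x ^ n = 1) (k : ℕ) :
    (∑ i ∈ range n, x ^ i) * x ^ k = ∑ i ∈ range n, x ^ i := by
  induction k with
  | zero => simp
  | succ k ih =>
    have h := geom_sum_mul x n
    rw [hx, sub_self, mul_sub, mul_one, sub_eq_zero] at h
    rw [pow_succ, ← mul_assoc, ih, h]

theorem add_sub_one_mul_mul_geom_sum_pow {x : R} {n : ℕ} (hx : x ^ n = 1) (y : R) (k t : ℕ) :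
    (x ^ k + (x - 1) * y * ∑ i ∈ range n, x ^ i) ^ t
      = x ^ (k * t) + (∑ p ∈ range t, x ^ (k * p)) * ((x - 1) * y * ∑ i ∈ range n, x ^ i) := by
  have hsum : (∑ i ∈ range n, x ^ i) * (x - 1) = 0 := by rw [geom_sum_mul, hx, sub_self]
  simp only [pow_mul]
  refine add_pow_eq_of_mul_eq_self_of_mul_self_eq_zero ?_ ?_ t
  · rw [mul_assoc, geom_sum_mul_pow_eq_self hx]
  · rw [show ∀ w : R, (x - 1) * y * w * ((x - 1) * y * w) = (x - 1) * y * (w * (x - 1)) * (y * w)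
      from fun w => by noncomm_ring, hsum, mul_zero, zero_mul]

end PowFormula

section CoeffSum

variable (𝕂 : Type*) [CommSemiring 𝕂] {G : Type*} [Group G]

noncomputable def coeffSumOn (S : Set G) : MonoidAlgebra 𝕂 G →ₗ[𝕂] 𝕂 :=
  (MonoidAlgebra.basis G 𝕂).constr 𝕂 (S.indicator 1)

theorem coeffSumOn_of (S : Set G) (g : G) : coeffSumOn 𝕂 S (of 𝕂 G g) = S.indicator 1 g := by
  rw [of_apply, ← basis_apply, coeffSumOn, Module.Basis.constr_basis]

end CoeffSum

section LeftExponent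

variable {G : Type*} [Group G] {a b : G} {d : ℕ}

def leftExponentDvdSet (a b : G) (d : ℕ) : Set G :=
  {g | ∃ j i : ℤ, g = a ^ j * b * a ^ i ∧ (d : ℤ) ∣ j}

theorem zpow_mul_mul_zpow_mem_leftExponentDvdSet_iff
    (hd : ∀ t : ℤ, b⁻¹ * a ^ t * b ∈ zpowers a → (d : ℤ) ∣ t) (j i : ℤ) :
    a ^ j * b * a ^ i ∈ leftExponentDvdSet a b d ↔ (d : ℤ) ∣ j := by
  refine ⟨fun ⟨j', i', h, hj'⟩ => ?_, fun hj => ⟨j, i, rfl, hj⟩⟩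
  have hconj : b⁻¹ * a ^ (j - j') * b = a ^ (i' - i) := by
    rw [show a ^ (i' - i) = b⁻¹ * a ^ (-j') * (a ^ j' * b * a ^ i') * a ^ (-i) by group, ← h]
    group
  exact (dvd_sub_left hj').1 (hd _ (hconj ▸ zpow_mem (mem_zpowers a) _))

theorem zpow_notMem_leftExponentDvdSet (hb : b ∉ zpowers a) (t : ℤ) :
    a ^ t ∉ leftExponentDvdSet a b d := by
  rintro ⟨j, i, h, -⟩
  refine hb (mem_zpowers_iff.2 ⟨-j + t - i, ?_⟩)
  rw [show b = a ^ (-j) * (a ^ j * b * a ^ i) * a ^ (-i) by group, ← h]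
  group

theorem coeffSumOn_pow_mul_sub_one_mul_mul_geom_sum (𝕂 : Type*) [CommRing 𝕂]
    (hd : ∀ t : ℤ, b⁻¹ * a ^ t * b ∈ zpowers a → (d : ℤ) ∣ t) (hd2 : 2 ≤ d) {e : ℕ}
    (he : d ∣ e) (n : ℕ) :
    coeffSumOn 𝕂 (leftExponentDvdSet a b d) ((of 𝕂 G a) ^ e *
      ((of 𝕂 G a - 1) * of 𝕂 G b * ∑ j ∈ range n, (of 𝕂 G a) ^ j)) = -n := by
  have hmem (j i : ℕ) : a ^ j * b * a ^ i ∈ leftExponentDvdSet a b d ↔ d ∣ j := by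
    exact_mod_cast zpow_mul_mul_zpow_mem_leftExponentDvdSet_iff hd j i
  have hsucc : ¬ d ∣ e + 1 := fun h => by
    have := Nat.le_of_dvd one_pos ((Nat.dvd_add_right he).1 h)
    omega
  have hterm (j : ℕ) : coeffSumOn 𝕂 (leftExponentDvdSet a b d)
      (of 𝕂 G (a ^ (e + 1) * b * a ^ j) - of 𝕂 G (a ^ e * b * a ^ j)) = -1 := by
    rw [map_sub, coeffSumOn_of, coeffSumOn_of, Set.indicator_of_notMem ((hmem _ _).not.2 hsucc),
      Set.indicator_of_mem ((hmem _ _).2 he)]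
    simp
  have hexpand : (of 𝕂 G a) ^ e * ((of 𝕂 G a - 1) * of 𝕂 G b * ∑ j ∈ range n, (of 𝕂 G a) ^ j)
      = ∑ j ∈ range n, (of 𝕂 G (a ^ (e + 1) * b * a ^ j) - of 𝕂 G (a ^ e * b * a ^ j)) := by
    simp only [map_mul, map_pow, mul_sum, sub_mul, mul_sub, pow_succ, one_mul, mul_assoc]
  rw [hexpand, map_sum, sum_congr rfl fun j _ => hterm j]
  simp

end LeftExponent

theorem stmt_11_general {𝕂 : Type*} [CommRing 𝕂] [CharZero 𝕂]
    {G : Type*} [Group G] (a b : G) (n : ℕ) (hn : 2 ≤ n) (ha : orderOf a = n)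
    (hb : b ∉ Subgroup.normalizer (Subgroup.zpowers a))
    (ahat : MonoidAlgebra 𝕂 G)
    (hahat : ahat = ∑ i ∈ Finset.range n, (MonoidAlgebra.of 𝕂 G a) ^ i)
    (M : ℕ) (hM2 : 2 ≤ M)
    (hMmem : b ∈ Subgroup.normalizer (Subgroup.zpowers (a ^ M)))
    (hMmin : ∀ m : ℕ, 2 ≤ m → m < M → b ∉ Subgroup.normalizer (Subgroup.zpowers (a ^ m)))
    (k : ℕ) (hgcd : Nat.gcd k n ≠ 1)
    (hkM : Nat.gcd k M ≠ 1 ∨ M = n)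
    (u : (MonoidAlgebra 𝕂 G)ˣ)
    (hu : (u : MonoidAlgebra 𝕂 G) = MonoidAlgebra.of 𝕂 G a ^ k + (MonoidAlgebra.of 𝕂 G a - 1) * MonoidAlgebra.of 𝕂 G b * ahat) :
    ¬ IsOfFinOrder u := by
  subst hahat
  set d := Nat.gcd k M
  have hd2 : 2 ≤ d := by
    have : d ≠ 0 := Nat.gcd_ne_zero_right (by omega)
    have : d ≠ 1 := by rcases hkM with h | rfl; exacts [h, hgcd]
    omega
  have hd (t : ℤ) (ht : b⁻¹ * a ^ t * b ∈ zpowers a) : (d : ℤ) ∣ t :=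
    (Int.natCast_dvd_natCast.2 (Nat.gcd_dvd_right k M)).trans <|
      dvd_of_inv_mul_zpow_mul_mem_zpowers (orderOf_pos_iff.1 (by omega)) hb (by omega)
        hMmem hMmin ht
  have hpow (t : ℕ) : coeffSumOn 𝕂 (leftExponentDvdSet a b d) (of 𝕂 G a ^ t) = 0 := by
    rw [← map_pow, coeffSumOn_of, ← zpow_natCast, Set.indicator_of_notMem
      (zpow_notMem_leftExponentDvdSet (fun h => hb (le_normalizer h)) _)]
  intro hu_fin
  obtain ⟨m, hm, hum⟩ := isOfFinOrder_iff_pow_eq_one.1 hu_fin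
  have hαn : of 𝕂 G a ^ n = 1 := by rw [← map_pow, ← ha, pow_orderOf_eq_one, map_one]
  have h1 : of 𝕂 G a ^ (k * m) + (∑ p ∈ range m, of 𝕂 G a ^ (k * p)) *
      ((of 𝕂 G a - 1) * of 𝕂 G b * ∑ i ∈ range n, of 𝕂 G a ^ i) = 1 := by
    rw [← add_sub_one_mul_mul_geom_sum_pow hαn, ← hu, ← Units.val_pow_eq_pow_val, hum,
      Units.val_one]
  have h2 := congrArg (coeffSumOn 𝕂 (leftExponentDvdSet a b d)) h1
  rw [map_add, hpow, sum_mul, map_sum, sum_congr rfl fun p _ =>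
    coeffSumOn_pow_mul_sub_one_mul_mul_geom_sum 𝕂 hd hd2
      ((Nat.gcd_dvd_left k M).mul_right p) n, ← pow_zero (of 𝕂 G a), hpow] at h2
  rw [zero_add, sum_const, card_range, nsmul_eq_mul, mul_neg, neg_eq_zero] at h2
  have hmn : m * n ≠ 0 := Nat.mul_ne_zero hm.ne' (by omega)
  exact hmn (by exact_mod_cast h2)

theorem stmt_11 {𝕂 : Type*} [CommRing 𝕂] [IsDomain 𝕂] [CharZero 𝕂]
    {G : Type*} [Group G] (a b : G) (n : ℕ) (hn : 2 ≤ n) (ha : orderOf a = n)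
    (hA : ¬ (Subgroup.zpowers a).Normal)
    (hb : b ∉ Subgroup.normalizer (Subgroup.zpowers a))
    (ahat : MonoidAlgebra 𝕂 G)
    (hahat : ahat = ∑ i ∈ Finset.range n, (MonoidAlgebra.of 𝕂 G a) ^ i)
    (M : ℕ) (hM2 : 2 ≤ M) (hMn : M ≤ n)
    (hMmem : b ∈ Subgroup.normalizer (Subgroup.zpowers (a ^ M)))
    (hMmin : ∀ m : ℕ, 2 ≤ m → m < M → b ∉ Subgroup.normalizer (Subgroup.zpowers (a ^ m)))
    (k : ℕ) (hk1 : 1 ≤ k) (hkn : k ≤ n) (hgcd : Nat.gcd k n ≠ 1)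
    (hkM : Nat.gcd k M ≠ 1 ∨ M = n)
    (u : (MonoidAlgebra 𝕂 G)ˣ)
    (hu : (u : MonoidAlgebra 𝕂 G) = MonoidAlgebra.of 𝕂 G a ^ k + (MonoidAlgebra.of 𝕂 G a - 1) * MonoidAlgebra.of 𝕂 G b * ahat) :
    ¬ IsOfFinOrder u :=
  stmt_11_general a b n hn ha hb ahat hahat M hM2 hMmem hMmin k hgcd hkM u hu
end

section
/- Let 𝕂 be an integral domain of characteristic zero, let ⟨a⟩ be a cyclic group of order n ≥ 2, and let k be an integer with 1 ≤ k < n. In the group ring 𝕂⟨a⟩ set Δ_k(a) = Σ_{i=0}^{k-1} a^i, Δ_{-k}(a) = Σ_{i=0}^{n-k-1} a^i and â = Σ_{i=0}^{n-1} a^i. Then for all integers j, l, s ≥ 0 and every integer β, the element Δ_{-k}(a)^j · Δ_k(a)^l · (a-1)^s is nonzero and is not equal to β·â. -/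
/-!
Both elements are integral combinations of powers of `a`, so they come from `ℤ⟨a⟩`, which
embeds coefficientwise into `𝕂⟨a⟩` because `𝕂` has characteristic zero. On `ℤ⟨a⟩` the
character `a ↦ ζ`, for `ζ` a primitive `n`-th root of unity in `ℂ`, kills `â` but sends
`Δ_{-k}(a)^j Δ_k(a)^l (a - 1)^s` to a product of the nonzero numbers
`(ζ^(n-k) - 1)/(ζ - 1)`, `(ζ^k - 1)/(ζ - 1)` and `ζ - 1`.
-/

open Finset MonoidAlgebra

namespace IsPrimitiveRoot

variable {R : Type*} [CommRing R] {ζ : R} {n : ℕ}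

theorem geom_sum_ne_zero_of_lt (hζ : IsPrimitiveRoot ζ n) {m : ℕ} (hm : m ≠ 0) (hmn : m < n) :
    ∑ i ∈ range m, ζ ^ i ≠ 0 := by
  intro h
  apply hζ.pow_ne_one_of_pos_of_lt hm hmn
  rw [← sub_eq_zero, ← geom_sum_mul, h, zero_mul]

theorem geom_sum_pow_mul_geom_sum_pow_mul_sub_one_pow_ne_zero [IsDomain R]
    (hζ : IsPrimitiveRoot ζ n) {k : ℕ} (hk : k ≠ 0) (hkn : k < n) (j l s : ℕ) :
    (∑ i ∈ range (n - k), ζ ^ i) ^ j * (∑ i ∈ range k, ζ ^ i) ^ l * (ζ - 1) ^ s ≠ 0 := by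
  have := hζ.geom_sum_ne_zero_of_lt (m := n - k) (by omega) (by omega)
  have := hζ.geom_sum_ne_zero_of_lt hk hkn
  have := sub_ne_zero.mpr (hζ.ne_one (by omega))
  positivity

end IsPrimitiveRoot

theorem MonoidAlgebra.exists_algHom_isPrimitiveRoot_of (k : Type*) [CommSemiring k]
    [Algebra k ℂ] {G : Type*} [Group G] {a : G} (hgen : ∀ g, g ∈ Subgroup.zpowers a)
    (ha : orderOf a ≠ 0) :
    ∃ χ : MonoidAlgebra k G →ₐ[k] ℂ, IsPrimitiveRoot (χ (of k G a)) (orderOf a) := by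
  have hζ := Complex.isPrimitiveRoot_exp _ ha
  have hu : IsPrimitiveRoot (hζ.isUnit ha).unit (orderOf a) :=
    IsPrimitiveRoot.coe_units_iff.mp hζ
  refine ⟨lift k ℂ G ((Units.coeHom ℂ).comp
    (monoidHomOfForallMemZpowers hgen (dvd_of_eq hu.eq_orderOf.symm))), ?_⟩
  simpa using hζ

theorem apply_ne_zsmul_apply_of_injective {A B C F F' : Type*} [AddCommGroup A]
    [AddCommGroup B] [AddCommGroup C] [FunLike F A B] [AddMonoidHomClass F A B]
    [FunLike F' A C] [AddMonoidHomClass F' A C] {ι : F} (hι : Function.Injective ι) (χ : F')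
    {y z : A} (hy : χ y ≠ 0) (hz : χ z = 0) (β : ℤ) : ι y ≠ β • ι z := by
  rw [← map_zsmul]
  intro h
  apply hy
  rw [hι h, map_zsmul, hz, smul_zero]

theorem stmt_12_general {𝕂 : Type*} [CommRing 𝕂] [CharZero 𝕂]
    {G : Type*} [Group G] (a : G) (n : ℕ) (ha : orderOf a = n)
    (hgen : Subgroup.zpowers a = ⊤)
    (k : ℕ) (hk1 : 1 ≤ k) (hkn : k < n) :
    ∀ (j l s : ℕ) (β : ℤ),
      (∑ i ∈ Finset.range (n - k), (MonoidAlgebra.of 𝕂 G a) ^ i) ^ j * (∑ i ∈ Finset.range (k), (MonoidAlgebra.of 𝕂 G a) ^ i) ^ l * (MonoidAlgebra.of 𝕂 G a - 1) ^ s ≠ 0 ∧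
      (∑ i ∈ Finset.range (n - k), (MonoidAlgebra.of 𝕂 G a) ^ i) ^ j * (∑ i ∈ Finset.range (k), (MonoidAlgebra.of 𝕂 G a) ^ i) ^ l * (MonoidAlgebra.of 𝕂 G a - 1) ^ s ≠ β • (∑ i ∈ Finset.range (n), (MonoidAlgebra.of 𝕂 G a) ^ i) := by
  intro j l s β
  obtain ⟨χ, hχ⟩ := exists_algHom_isPrimitiveRoot_of ℤ (a := a)
    (fun g ↦ hgen ▸ Subgroup.mem_top g) (by omega)
  rw [ha] at hχ
  let ι := mapRingHom G (Int.castRingHom 𝕂)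
  have hι : Function.Injective ι := map_injective _ Int.cast_injective
  have hιa : ι (of ℤ G a) = of 𝕂 G a := by simp [ι]
  let x := of ℤ G a
  have key := apply_ne_zsmul_apply_of_injective hι χ
    (y := (∑ i ∈ range (n - k), x ^ i) ^ j * (∑ i ∈ range k, x ^ i) ^ l * (x - 1) ^ s)
    (z := ∑ i ∈ range n, x ^ i)
    (by simpa only [map_mul, map_pow, map_sum, map_sub, map_one] using
      hχ.geom_sum_pow_mul_geom_sum_pow_mul_sub_one_pow_ne_zero (by omega) hkn j l s)
    (by simpa only [map_sum, map_pow] using hχ.geom_sum_eq_zero (by omega))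
  simp only [x, map_mul, map_pow, map_sum, map_sub, map_one, hιa] at key
  exact ⟨by simpa using key 0, key β⟩

theorem stmt_12 {𝕂 : Type*} [CommRing 𝕂] [IsDomain 𝕂] [CharZero 𝕂]
    {G : Type*} [Group G] (a : G) (n : ℕ) (hn : 2 ≤ n) (ha : orderOf a = n)
    (hgen : Subgroup.zpowers a = ⊤)
    (k : ℕ) (hk1 : 1 ≤ k) (hkn : k < n) :
    ∀ (j l s : ℕ) (β : ℤ),
      (∑ i ∈ Finset.range (n - k), (MonoidAlgebra.of 𝕂 G a) ^ i) ^ j * (∑ i ∈ Finset.range (k), (MonoidAlgebra.of 𝕂 G a) ^ i) ^ l * (MonoidAlgebra.of 𝕂 G a - 1) ^ s ≠ 0 ∧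
      (∑ i ∈ Finset.range (n - k), (MonoidAlgebra.of 𝕂 G a) ^ i) ^ j * (∑ i ∈ Finset.range (k), (MonoidAlgebra.of 𝕂 G a) ^ i) ^ l * (MonoidAlgebra.of 𝕂 G a - 1) ^ s ≠ β • (∑ i ∈ Finset.range (n), (MonoidAlgebra.of 𝕂 G a) ^ i) :=
  stmt_12_general a n ha hgen k hk1 hkn
end

section
/- Suppose 𝕂 has characteristic zero. Let k be an integer with 1 ≤ k < n such that b ∉ N_G(⟨a^k⟩). In 𝕂G define x₊ = (a-1)(Δ_k(a) + bâ), y₊ = (a-1)(Δ_k(a) + a^k bâ), x₋ = (a-1)(Δ_{-k}(a) - a^{-k} bâ), and y₋ = (a-1)(Δ_{-k}(a) - bâ), where Δ_k(a) = Σ_{i=0}^{k-1} a^i and Δ_{-k}(a) = Σ_{i=0}^{n-k-1} a^i. Then for every z_α ∈ {x₊, y₊} and every z_β ∈ {x₊, x₋, y₊, y₋} one has z_α·z_β = Δ_k(a)(a-1)·z_β ≠ 0, and for every z_α ∈ {x₋, y₋} and every z_β ∈ {x₊, x₋, y₊, y₋} one has z_α·z_β = Δ_{-k}(a)(a-1)·z_β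 ≠ 0. -/
/-!
Write `Δ_e = 1 + a + ⋯ + a^(e-1)` and `H = ⟨a⟩`. Each of `x₊, y₊, x₋, y₋` has the shape
`(a - 1)(Δ_e + c â)` with `a^e ≠ 1` and `c` supported outside `H`. Since `â (a - 1) = 0`, the
term `c â` dies when such an element is multiplied on the right by `a - 1`, which gives the
product formula. For nonvanishing, expand `Δ_e (a - 1) (a - 1) (Δ_e' + c' â)` as
`(a^e - 1)(a^e' - 1) + (a^e - 1)(a - 1) c' â`: the second summand is supported on cosets
`gH ≠ H`, so the coefficient of `1` comes from the first alone and equals `1` or `2`.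
-/

open Finset MonoidAlgebra
open scoped Pointwise

namespace MonoidAlgebra

variable {k G : Type*}

theorem mul_mem_supported_mul [Semiring k] [Mul G] {s t : Set G} {x y : k[G]}
    (hx : x ∈ supported k k s) (hy : y ∈ supported k k t) : x * y ∈ supported k k (s * t) := by
  classical
  rw [mem_supported] at *
  exact (Finset.coe_subset.2 (support_coeff_mul_subset x y)).trans
    (by simpa only [Finset.coe_mul] using Set.mul_subset_mul hx hy)

theorem of_mem_supported [Semiring k] [MulOneClass G] {s : Set G} {g : G} (hg : g ∈ s) :
    of k G g ∈ supported k k s := by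
  rw [mem_supported, of_apply, coeff_single]
  exact (Finset.coe_subset.2 Finsupp.support_single_subset).trans (by simpa using hg)

variable (k) in
noncomputable def subgroupAlgebra [CommSemiring k] [Group G] (H : Subgroup G) :
    Subalgebra k k[G] :=
  (supported k k (H : Set G)).toSubalgebra
    (by rw [one_def, ← of_apply]; exact of_mem_supported H.one_mem)
    fun _ _ hx hy ↦ supported_mono (Set.mul_subset_iff.2 fun _ hg _ hh ↦ H.mul_mem hg hh)
      (mul_mem_supported_mul hx hy)

section Subgroup

variable [CommSemiring k] [Group G] {H : Subgroup G} {x c : k[G]}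

theorem mem_subgroupAlgebra : x ∈ subgroupAlgebra k H ↔ x ∈ supported k k (H : Set G) :=
  Iff.rfl

theorem of_mem_subgroupAlgebra {g : G} (hg : g ∈ H) : of k G g ∈ subgroupAlgebra k H :=
  of_mem_supported hg

theorem mul_mem_supported_compl_of_left_mem_subgroupAlgebra (hx : x ∈ subgroupAlgebra k H)
    (hc : c ∈ supported k k (H : Set G)ᶜ) : x * c ∈ supported k k (H : Set G)ᶜ :=
  supported_mono (s := (H : Set G) * (H : Set G)ᶜ) (t := (H : Set G)ᶜ)
    (Set.mul_subset_iff.2 fun _ hg _ hh hgh ↦ hh ((H.mul_mem_cancel_left hg).1 hgh))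
    (mul_mem_supported_mul (mem_subgroupAlgebra.1 hx) hc)

theorem mul_mem_supported_compl_of_right_mem_subgroupAlgebra (hc : c ∈ supported k k (H : Set G)ᶜ)
    (hx : x ∈ subgroupAlgebra k H) : c * x ∈ supported k k (H : Set G)ᶜ :=
  supported_mono (s := (H : Set G)ᶜ * (H : Set G)) (t := (H : Set G)ᶜ)
    (Set.mul_subset_iff.2 fun _ hh _ hg hgh ↦ hh ((H.mul_mem_cancel_right hg).1 hgh))
    (mul_mem_supported_mul hc (mem_subgroupAlgebra.1 hx))

end Subgroup

theorem coeff_one_of_sub_one_mul_of_sub_one [Ring k] [Group G] [DecidableEq G] {x y : G}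
    (hx : x ≠ 1) (hy : y ≠ 1) :
    ((of k G x - 1) * (of k G y - 1)).coeff 1 = if x * y = 1 then 2 else 1 := by
  simp only [of_apply, one_def, mul_sub, sub_mul, single_mul_single, mul_one, one_mul, coeff_sub,
    coeff_single, Finsupp.coe_sub, Pi.sub_apply, Finsupp.single_apply, hx, hy, if_false, if_true]
  split_ifs <;> norm_num

end MonoidAlgebra

section CyclicSubgroup

variable {𝕂 G : Type*} [CommRing 𝕂] [Group G]

variable (𝕂) in
noncomputable def subOneMulGeomSumAdd (a : G) (e : ℕ) (c : 𝕂[G]) : 𝕂[G] :=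
  (of 𝕂 G a - 1) * ((∑ i ∈ range e, of 𝕂 G a ^ i) + c * ∑ i ∈ range (orderOf a), of 𝕂 G a ^ i)

variable {a : G}

theorem geom_sum_orderOf_mul_of_sub_one :
    (∑ i ∈ range (orderOf a), of 𝕂 G a ^ i) * (of 𝕂 G a - 1) = 0 := by
  rw [geom_sum_mul, ← map_pow, pow_orderOf_eq_one, map_one, sub_self]

theorem subOneMulGeomSumAdd_mul_subOneMulGeomSumAdd (e e' : ℕ) (c c' : 𝕂[G]) :
    subOneMulGeomSumAdd 𝕂 a e c * subOneMulGeomSumAdd 𝕂 a e' c' =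
      (∑ i ∈ range e, of 𝕂 G a ^ i) * (of 𝕂 G a - 1) * subOneMulGeomSumAdd 𝕂 a e' c' := by
  have hcomm : (of 𝕂 G a - 1) * ∑ i ∈ range e, of 𝕂 G a ^ i =
      (∑ i ∈ range e, of 𝕂 G a ^ i) * (of 𝕂 G a - 1) := by
    rw [mul_geom_sum, geom_sum_mul]
  simp only [subOneMulGeomSumAdd]
  calc _ = (of 𝕂 G a - 1) * ((∑ i ∈ range e, of 𝕂 G a ^ i) * (of 𝕂 G a - 1) +
          c * ((∑ i ∈ range (orderOf a), of 𝕂 G a ^ i) * (of 𝕂 G a - 1))) *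
          ((∑ i ∈ range e', of 𝕂 G a ^ i) + c' * ∑ i ∈ range (orderOf a), of 𝕂 G a ^ i) := by
        simp only [add_mul, mul_add, mul_assoc]
    _ = _ := by
        rw [geom_sum_orderOf_mul_of_sub_one, mul_zero, add_zero]
        simp only [← mul_assoc, hcomm]

theorem subOneMulGeomSumAdd_mul_subOneMulGeomSumAdd_ne_zero [CharZero 𝕂] {e e' : ℕ}
    (he : a ^ e ≠ 1) (he' : a ^ e' ≠ 1) (c : 𝕂[G]) {c' : 𝕂[G]}
    (hc' : c' ∈ supported 𝕂 𝕂 (Subgroup.zpowers a : Set G)ᶜ) :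
    subOneMulGeomSumAdd 𝕂 a e c * subOneMulGeomSumAdd 𝕂 a e' c' ≠ 0 := by
  classical
  have ha : of 𝕂 G a ∈ subgroupAlgebra 𝕂 (Subgroup.zpowers a) :=
    of_mem_subgroupAlgebra (Subgroup.mem_zpowers a)
  have hdecomp : subOneMulGeomSumAdd 𝕂 a e c * subOneMulGeomSumAdd 𝕂 a e' c' =
      (of 𝕂 G (a ^ e) - 1) * (of 𝕂 G (a ^ e') - 1) +
        (of 𝕂 G a ^ e - 1) * (of 𝕂 G a - 1) * c' * ∑ i ∈ range (orderOf a), of 𝕂 G a ^ i := by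
    rw [subOneMulGeomSumAdd_mul_subOneMulGeomSumAdd, subOneMulGeomSumAdd, geom_sum_mul, mul_add,
      mul_geom_sum, mul_add, map_pow, map_pow]
    simp only [mul_assoc]
  have hoff : (of 𝕂 G a ^ e - 1) * (of 𝕂 G a - 1) * c' * ∑ i ∈ range (orderOf a), of 𝕂 G a ^ i ∈
      supported 𝕂 𝕂 (Subgroup.zpowers a : Set G)ᶜ :=
    mul_mem_supported_compl_of_right_mem_subgroupAlgebra
      (mul_mem_supported_compl_of_left_mem_subgroupAlgebra
        (Subalgebra.mul_mem _ (Subalgebra.sub_mem _ (Subalgebra.pow_mem _ ha e) (one_mem _))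
          (Subalgebra.sub_mem _ ha (one_mem _))) hc')
      (Subalgebra.sum_mem _ fun i _ ↦ Subalgebra.pow_mem _ ha i)
  intro h
  have h1 := congrArg (fun x : 𝕂[G] ↦ x.coeff 1) h
  simp only [hdecomp, coeff_add, Finsupp.add_apply, coeff_one_of_sub_one_mul_of_sub_one he he',
    mem_supported'.1 hoff 1 (by simp), add_zero, coeff_zero, Finsupp.coe_zero,
    Pi.zero_apply] at h1
  split_ifs at h1 <;> norm_num at h1

end CyclicSubgroup

theorem stmt_13_general {𝕂 : Type*} [CommRing 𝕂] [CharZero 𝕂]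
    {G : Type*} [Group G] (a b : G) (n : ℕ) (ha : orderOf a = n)
    (hb : b ∉ Subgroup.normalizer (Subgroup.zpowers a))
    (ahat : MonoidAlgebra 𝕂 G)
    (hahat : ahat = ∑ i ∈ Finset.range n, (MonoidAlgebra.of 𝕂 G a) ^ i)
    (k : ℕ) (hk1 : 1 ≤ k) (hkn : k < n)
    (xp yp xm ym : MonoidAlgebra 𝕂 G)
    (hxp : xp = (MonoidAlgebra.of 𝕂 G a - 1) * ((∑ i ∈ Finset.range (k), (MonoidAlgebra.of 𝕂 G a) ^ i) + MonoidAlgebra.of 𝕂 G b * ahat))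
    (hyp : yp = (MonoidAlgebra.of 𝕂 G a - 1) *
        ((∑ i ∈ Finset.range (k), (MonoidAlgebra.of 𝕂 G a) ^ i) + MonoidAlgebra.of 𝕂 G a ^ k * MonoidAlgebra.of 𝕂 G b * ahat))
    (hxm : xm = (MonoidAlgebra.of 𝕂 G a - 1) *
        ((∑ i ∈ Finset.range (n - k), (MonoidAlgebra.of 𝕂 G a) ^ i) - MonoidAlgebra.of 𝕂 G (a ^ (-(k : ℤ))) * MonoidAlgebra.of 𝕂 G b * ahat))
    (hym : ym = (MonoidAlgebra.of 𝕂 G a - 1) *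
        ((∑ i ∈ Finset.range (n - k), (MonoidAlgebra.of 𝕂 G a) ^ i) - MonoidAlgebra.of 𝕂 G b * ahat)) :
    (∀ zα ∈ ({xp, yp} : Set (MonoidAlgebra 𝕂 G)),
      ∀ zβ ∈ ({xp, xm, yp, ym} : Set (MonoidAlgebra 𝕂 G)),
        zα * zβ = (∑ i ∈ Finset.range (k), (MonoidAlgebra.of 𝕂 G a) ^ i) * (MonoidAlgebra.of 𝕂 G a - 1) * zβ ∧ zα * zβ ≠ 0) ∧
    (∀ zα ∈ ({xm, ym} : Set (MonoidAlgebra 𝕂 G)),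
      ∀ zβ ∈ ({xp, xm, yp, ym} : Set (MonoidAlgebra 𝕂 G)),
        zα * zβ = (∑ i ∈ Finset.range (n - k), (MonoidAlgebra.of 𝕂 G a) ^ i) * (MonoidAlgebra.of 𝕂 G a - 1) * zβ ∧ zα * zβ ≠ 0) := by
  subst ha hahat
  set T := supported 𝕂 𝕂 (Subgroup.zpowers a : Set G)ᶜ
  have hB : of 𝕂 G b ∈ T := of_mem_supported fun h ↦ hb (Subgroup.le_normalizer h)
  have hk : a ^ k ≠ 1 := pow_ne_one_of_lt_orderOf (by omega) hkn
  have hnk : a ^ (orderOf a - k) ≠ 1 := pow_ne_one_of_lt_orderOf (by omega) (by omega)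
  have hplus : ∀ z ∈ ({xp, yp} : Set 𝕂[G]), ∃ c ∈ T, z = subOneMulGeomSumAdd 𝕂 a k c := by
    rintro z (rfl | rfl)
    exacts [⟨_, hB, hxp⟩, ⟨_, mul_mem_supported_compl_of_left_mem_subgroupAlgebra
      (Subalgebra.pow_mem _ (of_mem_subgroupAlgebra (Subgroup.mem_zpowers a)) k) hB, hyp⟩]
  have hminus : ∀ z ∈ ({xm, ym} : Set 𝕂[G]),
      ∃ c ∈ T, z = subOneMulGeomSumAdd 𝕂 a (orderOf a - k) c := by
    rintro z (rfl | rfl)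
    exacts [⟨_, T.neg_mem (mul_mem_supported_compl_of_left_mem_subgroupAlgebra
      (of_mem_subgroupAlgebra (Subgroup.zpow_mem_zpowers a _)) hB),
      by rw [hxm, subOneMulGeomSumAdd, neg_mul, ← sub_eq_add_neg]⟩,
      ⟨_, T.neg_mem hB, by rw [hym, subOneMulGeomSumAdd, neg_mul, ← sub_eq_add_neg]⟩]
  have key : ∀ e, a ^ e ≠ 1 → ∀ c, ∀ zβ ∈ ({xp, xm, yp, ym} : Set 𝕂[G]),
      subOneMulGeomSumAdd 𝕂 a e c * zβ =
        (∑ i ∈ range e, of 𝕂 G a ^ i) * (of 𝕂 G a - 1) * zβ ∧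
      subOneMulGeomSumAdd 𝕂 a e c * zβ ≠ 0 := by
    intro e he c zβ hzβ
    obtain ⟨e', he', c', hc', rfl⟩ : ∃ e', a ^ e' ≠ 1 ∧ ∃ c' ∈ T,
        zβ = subOneMulGeomSumAdd 𝕂 a e' c' := by
      rcases hzβ with rfl | rfl | rfl | rfl
      exacts [⟨k, hk, hplus _ (by simp)⟩, ⟨_, hnk, hminus _ (by simp)⟩,
        ⟨k, hk, hplus _ (by simp)⟩, ⟨_, hnk, hminus _ (by simp)⟩]
    exact ⟨subOneMulGeomSumAdd_mul_subOneMulGeomSumAdd e e' c c',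
      subOneMulGeomSumAdd_mul_subOneMulGeomSumAdd_ne_zero he he' c hc'⟩
  refine ⟨fun zα hα ↦ ?_, fun zα hα ↦ ?_⟩
  · obtain ⟨c, -, rfl⟩ := hplus zα hα
    exact key k hk c
  · obtain ⟨c, -, rfl⟩ := hminus zα hα
    exact key _ hnk c

theorem stmt_13 {𝕂 : Type*} [CommRing 𝕂] [IsDomain 𝕂] [CharZero 𝕂]
    {G : Type*} [Group G] (a b : G) (n : ℕ) (hn : 2 ≤ n) (ha : orderOf a = n)
    (hA : ¬ (Subgroup.zpowers a).Normal)
    (hb : b ∉ Subgroup.normalizer (Subgroup.zpowers a))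
    (ahat : MonoidAlgebra 𝕂 G)
    (hahat : ahat = ∑ i ∈ Finset.range n, (MonoidAlgebra.of 𝕂 G a) ^ i)
    (k : ℕ) (hk1 : 1 ≤ k) (hkn : k < n)
    (hbk : b ∉ Subgroup.normalizer (Subgroup.zpowers (a ^ k)))
    (xp yp xm ym : MonoidAlgebra 𝕂 G)
    (hxp : xp = (MonoidAlgebra.of 𝕂 G a - 1) * ((∑ i ∈ Finset.range (k), (MonoidAlgebra.of 𝕂 G a) ^ i) + MonoidAlgebra.of 𝕂 G b * ahat))
    (hyp : yp = (MonoidAlgebra.of 𝕂 G a - 1) *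
        ((∑ i ∈ Finset.range (k), (MonoidAlgebra.of 𝕂 G a) ^ i) + MonoidAlgebra.of 𝕂 G a ^ k * MonoidAlgebra.of 𝕂 G b * ahat))
    (hxm : xm = (MonoidAlgebra.of 𝕂 G a - 1) *
        ((∑ i ∈ Finset.range (n - k), (MonoidAlgebra.of 𝕂 G a) ^ i) - MonoidAlgebra.of 𝕂 G (a ^ (-(k : ℤ))) * MonoidAlgebra.of 𝕂 G b * ahat))
    (hym : ym = (MonoidAlgebra.of 𝕂 G a - 1) *
        ((∑ i ∈ Finset.range (n - k), (MonoidAlgebra.of 𝕂 G a) ^ i) - MonoidAlgebra.of 𝕂 G b * ahat)) :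
    (∀ zα ∈ ({xp, yp} : Set (MonoidAlgebra 𝕂 G)),
      ∀ zβ ∈ ({xp, xm, yp, ym} : Set (MonoidAlgebra 𝕂 G)),
        zα * zβ = (∑ i ∈ Finset.range (k), (MonoidAlgebra.of 𝕂 G a) ^ i) * (MonoidAlgebra.of 𝕂 G a - 1) * zβ ∧ zα * zβ ≠ 0) ∧
    (∀ zα ∈ ({xm, ym} : Set (MonoidAlgebra 𝕂 G)),
      ∀ zβ ∈ ({xp, xm, yp, ym} : Set (MonoidAlgebra 𝕂 G)),
        zα * zβ = (∑ i ∈ Finset.range (n - k), (MonoidAlgebra.of 𝕂 G a) ^ i) * (MonoidAlgebra.of 𝕂 G a - 1) * zβ ∧ zα * zβ ≠ 0) :=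
  stmt_13_general a b n ha hb ahat hahat k hk1 hkn xp yp xm ym hxp hyp hxm hym
end

section
/- Let K be a commutative ring, G a group, a ∈ G an element of finite order n ≥ 1, b ∈ G, and k an integer. In the group of units of the group ring KG, the units w = 1 + (a-1)bâ and u_k = a^k + (a-1)bâ = w·a^k satisfy the relation ((u_k, w), w) = 1; that is, the commutator (u_k, w) commutes with w. -/
/-!
Write `x = (a - 1) b â`. Since `â (a - 1) = a^n - 1 = 0`, we get `x² = 0` and `x a^k = x`.
Hence `u = w a^k` and `w⁻¹ = 1 - x`, so `(u, w) = a^{-k} w⁻¹ a^k w = 1 + x - a^{-k} x`,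
and `x - a^{-k} x` commutes with `x` because all of `x²`, `x a^{-k} x` and `a^{-k} x²` vanish.
-/

theorem mul_map_zpow_eq_self_of_mul_map_eq_self {G M : Type*} [Group G] [Monoid M]
    (f : G →* M) {s : M} {a : G} (h : s * f a = s) (m : ℤ) : s * f (a ^ m) = s := by
  have h_inv : s * f a⁻¹ = s := by
    conv_lhs => rw [← h]
    rw [mul_assoc, ← map_mul, mul_inv_cancel, map_one, mul_one]
  induction m using Int.induction_on with
  | zero => simp
  | succ i ih => rw [zpow_add_one, map_mul, ← mul_assoc, ih, h]
  | pred i ih => rw [zpow_sub_one, map_mul, ← mul_assoc, ih, h_inv]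

section SquareZero

variable {R : Type*} [Ring R] {x : R} {w g : Rˣ}

theorem Units.val_inv_eq_one_sub_of_val_eq_one_add (hw : (w : R) = 1 + x) (hx : x * x = 0) :
    ((w⁻¹ : Rˣ) : R) = 1 - x :=
  Units.inv_eq_of_mul_eq_one_right <| by
    rw [hw, show (1 + x) * (1 - x) = 1 - x * x by noncomm_ring, hx, sub_zero]

theorem Units.val_commutator_of_mul_self_eq_zero (hw : (w : R) = 1 + x) (hx : x * x = 0) (hxg : x * g = x) :
    ((g⁻¹ * w⁻¹ * g * w : Rˣ) : R) = 1 + x - (g⁻¹ : Rˣ) * x := by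
  have hconj : ((g⁻¹ : Rˣ) : R) * (1 - x) * g = 1 - (g⁻¹ : Rˣ) * x := by
    rw [mul_one_sub, sub_mul, mul_assoc _ x, hxg, Units.inv_mul]
  simp only [Units.val_mul]
  rw [Units.val_inv_eq_one_sub_of_val_eq_one_add hw hx, hconj, hw]
  calc (1 - (g⁻¹ : Rˣ) * x) * (1 + x) = 1 + x - (g⁻¹ : Rˣ) * x - (g⁻¹ : Rˣ) * (x * x) := by
        noncomm_ring
    _ = 1 + x - (g⁻¹ : Rˣ) * x := by rw [hx, mul_zero, sub_zero]

theorem Units.commute_commutator_mul_of_mul_self_eq_zero (hw : (w : R) = 1 + x) (hx : x * x = 0)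
    (hxg : x * g = x) : Commute ((w * g)⁻¹ * w⁻¹ * (w * g) * w) w := by
  have hxg_inv : x * (g⁻¹ : Rˣ) = x := by
    rw [← hxg, mul_assoc, Units.mul_inv, mul_one, hxg]
  have hcomm : (w * g)⁻¹ * w⁻¹ * (w * g) * w = g⁻¹ * w⁻¹ * g * w := by group
  rw [hcomm, ← Commute.units_val_iff, Units.val_commutator_of_mul_self_eq_zero hw hx hxg, hw, add_sub_assoc]
  have hnil : Commute (x - (g⁻¹ : Rˣ) * x) x := by
    change (x - (g⁻¹ : Rˣ) * x) * x = x * (x - (g⁻¹ : Rˣ) * x)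
    rw [sub_mul, mul_sub, mul_assoc, ← mul_assoc x, hxg_inv, hx, mul_zero]
  exact (Commute.one_right _).add_right ((Commute.one_left x).add_left hnil)

end SquareZero

theorem stmt_14_general {K : Type*} [CommRing K] {G : Type*} [Group G]
    (a b : G) (n : ℕ) (ha : orderOf a = n) (k : ℤ)
    (ahat : MonoidAlgebra K G)
    (hahat : ahat = ∑ i ∈ Finset.range n, (MonoidAlgebra.of K G a) ^ i)
    (w u : (MonoidAlgebra K G)ˣ)
    (hw : (w : MonoidAlgebra K G) = 1 + (MonoidAlgebra.of K G a - 1) * MonoidAlgebra.of K G b * ahat)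
    (hu : (u : MonoidAlgebra K G) = MonoidAlgebra.of K G (a ^ k) + (MonoidAlgebra.of K G a - 1) * MonoidAlgebra.of K G b * ahat) :
    (u⁻¹ * w⁻¹ * u * w) * w = w * (u⁻¹ * w⁻¹ * u * w) := by
  set f := MonoidAlgebra.of K G
  set x := (f a - 1) * f b * ahat with hx_def
  have hannih : ahat * (f a - 1) = 0 := by
    rw [hahat, geom_sum_mul, ← map_pow, ← ha, pow_orderOf_eq_one, map_one, sub_self]
  have hfix : ahat * f a = ahat := by rwa [mul_sub_one, sub_eq_zero] at hannih
  have hx : x * x = 0 := by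
    rw [hx_def, show (f a - 1) * f b * ahat * ((f a - 1) * f b * ahat)
      = (f a - 1) * f b * (ahat * (f a - 1)) * f b * ahat by noncomm_ring, hannih]
    simp only [mul_zero, zero_mul]
  set g : (MonoidAlgebra K G)ˣ := Units.map f (toUnits (a ^ k))
  have hg : (g : MonoidAlgebra K G) = f (a ^ k) := rfl
  have hxg : x * g = x := by
    rw [hg, hx_def, mul_assoc, mul_map_zpow_eq_self_of_mul_map_eq_self f hfix]
  have hu_eq : u = w * g := Units.ext <| by
    rw [Units.val_mul, hu, hw, add_mul, one_mul, hxg, hg, add_comm]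
  rw [hu_eq]
  exact Units.commute_commutator_mul_of_mul_self_eq_zero hw hx hxg

theorem stmt_14 {K : Type*} [CommRing K] {G : Type*} [Group G]
    (a b : G) (n : ℕ) (hn : 1 ≤ n) (ha : orderOf a = n) (k : ℤ)
    (ahat : MonoidAlgebra K G)
    (hahat : ahat = ∑ i ∈ Finset.range n, (MonoidAlgebra.of K G a) ^ i)
    (w u : (MonoidAlgebra K G)ˣ)
    (hw : (w : MonoidAlgebra K G) = 1 + (MonoidAlgebra.of K G a - 1) * MonoidAlgebra.of K G b * ahat)
    (hw' : ((w⁻¹ : (MonoidAlgebra K G)ˣ) : MonoidAlgebra K G) = 1 - (MonoidAlgebra.of K G a - 1) * MonoidAlgebra.of K G b * ahat)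
    (hu : (u : MonoidAlgebra K G) = MonoidAlgebra.of K G (a ^ k) + (MonoidAlgebra.of K G a - 1) * MonoidAlgebra.of K G b * ahat)
    (hu' : ((u⁻¹ : (MonoidAlgebra K G)ˣ) : MonoidAlgebra K G)
        = MonoidAlgebra.of K G (a ^ (-k)) - MonoidAlgebra.of K G (a ^ (-k)) * ((MonoidAlgebra.of K G a - 1) * MonoidAlgebra.of K G b * ahat)) :
    (u⁻¹ * w⁻¹ * u * w) * w = w * (u⁻¹ * w⁻¹ * u * w) :=
  stmt_14_general a b n ha k ahat hahat w u hw hu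
end

section
/- Let k be an integer with 1 ≤ k < n. In U(𝕂G) the commutator of the units u_k = a^k + (a-1)bâ and w = 1 + (a-1)bâ satisfies (u_k, w) = u_k⁻¹w⁻¹u_k w = 1 + (a^{-k} - a^{1-k} + a - 1)bâ. Moreover, if 𝕂 has characteristic zero and b ∉ N_G(⟨a^k⟩), then (u_k, w) ≠ 1. -/
/-!
Put `x = (a - 1) b â`. Since `â (a - 1) = a ^ n - 1 = 0`, we have `x a = x` and `x ^ 2 = 0`, so
`w = 1 + x` has inverse `1 - x`, `u = a ^ k + x` has inverse `a ^ (-k) (1 - x)`, and the commutator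
collapses to `1 + (1 - a ^ (-k)) x`.

If the commutator is trivial, the coefficient of `b` in `(1 - a ^ (-k)) (a - 1) b â = 0` compares,
over `i < n`, the number of solutions of `a ^ (-k) b a ^ i = b` and `a b a ^ i = b` with that of
`a ^ (1 - k) b a ^ i = b` and `b a ^ i = b`. The last one is solved by `i = 0`, so in characteristic
zero `b` conjugates `a ^ k` or `a` into `⟨a⟩`. A subgroup of the finite cyclic group `⟨a⟩` is
determined by its order, so `b` then normalizes `⟨a ^ k⟩` or `⟨a⟩`.
-/

open Finset Subgroup MonoidAlgebra

section Cyclic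

variable {G : Type*} [Group G]

theorem Subgroup.zpowers_pow_eq_zpowers_pow_gcd (a : G) (i : ℕ) :
    zpowers (a ^ i) = zpowers (a ^ (orderOf a).gcd i) := by
  apply le_antisymm
  · rw [zpowers_le]
    obtain ⟨m, hm⟩ := Nat.gcd_dvd_right (orderOf a) i
    exact mem_zpowers_iff.mpr ⟨m, by rw [zpow_natCast, ← pow_mul, ← hm]⟩
  · rw [zpowers_le]
    refine mem_zpowers_iff.mpr ⟨(orderOf a).gcdB i, ?_⟩
    rw [← zpow_natCast, ← zpow_natCast, ← zpow_mul, Nat.gcd_eq_gcd_ab, zpow_add,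
      zpow_mul a (orderOf a), zpow_natCast, pow_orderOf_eq_one, one_zpow, one_mul]

theorem Subgroup.zpowers_eq_zpowers_of_orderOf_eq {a y z : G} (ha : IsOfFinOrder a)
    (hy : y ∈ zpowers a) (hz : z ∈ zpowers a) (h : orderOf y = orderOf z) :
    zpowers y = zpowers z := by
  have hform : ∀ x ∈ zpowers a, zpowers x = zpowers (a ^ (orderOf a / orderOf x)) := by
    intro x hx
    obtain ⟨i, rfl⟩ := Submonoid.mem_powers_iff _ _ |>.mp (ha.mem_powers_iff_mem_zpowers.mpr hx)
    rw [ha.orderOf_pow, Nat.div_div_self (Nat.gcd_dvd_left _ _) ha.orderOf_pos.ne',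
      zpowers_pow_eq_zpowers_pow_gcd]
  rw [hform y hy, hform z hz, h]

theorem Subgroup.mem_normalizer_zpowers_of_conj_mem {a y g : G} (ha : IsOfFinOrder a)
    (hy : y ∈ zpowers a) (hconj : g⁻¹ * y * g ∈ zpowers a) :
    g ∈ Subgroup.normalizer (zpowers y) := by
  have horder : orderOf y = orderOf (g⁻¹ * y * g) := by
    simpa [MulAut.conj_apply] using (MulEquiv.orderOf_eq (MulAut.conj g⁻¹) y).symm
  rw [← inv_mem_iff, mem_normalizer_iff_map_conj_eq]
  have hmap := MonoidHom.map_zpowers (MulAut.conj g⁻¹).toMonoidHom y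
  simp only [MulEquiv.coe_toMonoidHom, MulAut.conj_apply, inv_inv] at hmap
  rwa [← zpowers_eq_zpowers_of_orderOf_eq ha hy hconj horder] at hmap

end Cyclic

theorem Units.val_commutator_eq_of_mul_eq_self {R : Type*} [Ring R] (p u w : Rˣ) (x : R)
    (hxp : x * p = x) (hxx : x * x = 0) (hu : (u : R) = p + x) (hw : (w : R) = 1 + x) :
    ((u⁻¹ * w⁻¹ * u * w : Rˣ) : R) = 1 + (1 - ↑p⁻¹) * x := by
  have hxp' : x * ↑p⁻¹ = x := (Units.mul_inv_eq_iff_eq_mul (b := p)).mpr hxp.symm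
  have hxpx : x * (↑p * x) = 0 := by rw [← mul_assoc, hxp, hxx]
  have hw' : ↑w⁻¹ = 1 - x := Units.inv_eq_of_mul_eq_one_right <| by
    rw [hw, add_mul, one_mul, mul_sub, mul_one, hxx]; abel
  have hu' : ↑u⁻¹ = ↑p⁻¹ * (1 - x) := Units.inv_eq_of_mul_eq_one_right <| by
    rw [hu, add_mul, ← mul_assoc, ← mul_assoc, Units.mul_inv, hxp', ← add_mul, ← hw, ← hw',
      Units.mul_inv]
  simp only [Units.val_mul, hu', hw', hu, hw, mul_add, add_mul, mul_sub, sub_mul, mul_one, one_mul,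
    mul_assoc, hxx, hxp, hxpx, mul_zero, Units.inv_mul, Units.inv_mul_cancel_left]
  abel

section GeomSum

variable {R : Type*} [Ring R] {α : R} {n : ℕ}

theorem geom_sum_mul_self_of_pow_eq_one (hα : α ^ n = 1) :
    (∑ i ∈ range n, α ^ i) * α = ∑ i ∈ range n, α ^ i := by
  rw [← sub_eq_zero, ← mul_sub_one, geom_sum_mul, hα, sub_self]

theorem mul_geom_sum_mul_pow_of_pow_eq_one (hα : α ^ n = 1) (y : R) (j : ℕ) :
    y * (∑ i ∈ range n, α ^ i) * α ^ j = y * ∑ i ∈ range n, α ^ i := by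
  induction j with
  | zero => rw [pow_zero, mul_one]
  | succ j ih => rw [pow_succ, ← mul_assoc, ih, mul_assoc, geom_sum_mul_self_of_pow_eq_one hα]

theorem sub_one_mul_mul_geom_sum_mul_self_of_pow_eq_one (hα : α ^ n = 1) (y : R) :
    (α - 1) * y * (∑ i ∈ range n, α ^ i) * ((α - 1) * y * ∑ i ∈ range n, α ^ i) = 0 := by
  have h : (∑ i ∈ range n, α ^ i) * (α - 1) = 0 := by rw [geom_sum_mul, hα, sub_self]
  simp only [mul_assoc, ← mul_assoc (∑ i ∈ range n, α ^ i) (α - 1), h, zero_mul, mul_zero]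

end GeomSum

namespace MonoidAlgebra

variable {k G : Type*} [Group G]

theorem coeff_of_mul_geom_sum_apply [Semiring k] [DecidableEq G] (g a h : G) (n : ℕ) :
    (of k G g * ∑ i ∈ range n, of k G a ^ i).coeff h = #{i ∈ range n | g * a ^ i = h} := by
  simp only [Finset.mul_sum, of_apply, single_pow, single_mul_single, one_pow, mul_one, coeff_sum,
    coeff_single, Finsupp.finsetSum_apply, Finsupp.single_apply, Finset.sum_boole]

theorem one_sub_of_zpow_neg_mul [Ring k] (a : G) (m : ℤ) (y : MonoidAlgebra k G) :
    (1 - of k G (a ^ (-m))) * ((of k G a - 1) * y)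
      = (of k G (a ^ (-m)) - of k G (a ^ (1 - m)) + of k G a - 1) * y := by
  have h : of k G (a ^ (-m)) * of k G a = of k G (a ^ (1 - m)) := by
    rw [← map_mul, ← zpow_add_one, neg_add_eq_sub]
  simp only [← mul_assoc, mul_sub, sub_mul, add_mul, one_mul, h]
  abel

theorem conj_mem_zpowers_of_mul_geom_sum_eq_zero [Ring k] [CharZero k] {a b c : G} {n : ℕ}
    (hn : 0 < n)
    (h : (of k G c - of k G (a * c) + of k G a - 1) * of k G b *
      ∑ i ∈ range n, of k G a ^ i = 0) :
    b⁻¹ * c * b ∈ zpowers a ∨ b⁻¹ * a * b ∈ zpowers a := by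
  classical
  set N : G → ℕ := fun g ↦ #{i ∈ range n | g * a ^ i = b}
  have hN : ∀ x, 0 < N (x * b) → b⁻¹ * x * b ∈ zpowers a := by
    intro x hx
    obtain ⟨i, -, hi⟩ := Finset.filter_nonempty_iff.mp (Finset.card_pos.mp hx)
    refine mem_zpowers_iff.mpr ⟨-i, ?_⟩
    calc a ^ (-i : ℤ) = b⁻¹ * (x * b * a ^ i) * (a ^ i)⁻¹ := by rw [hi]; group
      _ = b⁻¹ * x * b := by group
  have hN1 : 0 < N b := Finset.card_pos.mpr ⟨0, by simp [hn]⟩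
  have hcount : (N (c * b) : k) - N (a * c * b) + N (a * b) - N b = 0 := by
    have hcoeff := congrArg (fun y ↦ y.coeff b) h
    simpa only [sub_mul, add_mul, one_mul, ← map_mul, coeff_sub, coeff_add, Finsupp.sub_apply,
      Finsupp.add_apply, coeff_of_mul_geom_sum_apply, coeff_zero, Finsupp.coe_zero,
      Pi.zero_apply] using hcoeff
  have hcast : ((N (c * b) + N (a * b) : ℕ) : k) = (N (a * c * b) + N b : ℕ) := by
    rw [← sub_eq_zero, ← hcount]; push_cast; abel
  have hsum : N (c * b) + N (a * b) = N (a * c * b) + N b := by exact_mod_cast hcast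
  by_cases hc : 0 < N (c * b)
  · exact .inl (hN c hc)
  · exact .inr (hN a (by omega))

end MonoidAlgebra

theorem stmt_15_general {𝕂 : Type*} [CommRing 𝕂]
    {G : Type*} [Group G] (a b : G) (n : ℕ) (hn : 2 ≤ n) (ha : orderOf a = n)
    (hb : b ∉ Subgroup.normalizer (Subgroup.zpowers a))
    (ahat : MonoidAlgebra 𝕂 G)
    (hahat : ahat = ∑ i ∈ Finset.range n, (MonoidAlgebra.of 𝕂 G a) ^ i)
    (k : ℕ)
    (w u : (MonoidAlgebra 𝕂 G)ˣ)
    (hw : (w : MonoidAlgebra 𝕂 G) = 1 + (MonoidAlgebra.of 𝕂 G a - 1) * MonoidAlgebra.of 𝕂 G b * ahat)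
    (hu : (u : MonoidAlgebra 𝕂 G) = MonoidAlgebra.of 𝕂 G a ^ k + (MonoidAlgebra.of 𝕂 G a - 1) * MonoidAlgebra.of 𝕂 G b * ahat) :
    ((u⁻¹ * w⁻¹ * u * w : (MonoidAlgebra 𝕂 G)ˣ) : MonoidAlgebra 𝕂 G)
        = 1 + (MonoidAlgebra.of 𝕂 G (a ^ (-(k : ℤ))) - MonoidAlgebra.of 𝕂 G (a ^ (1 - (k : ℤ)))
            + MonoidAlgebra.of 𝕂 G a - 1) * MonoidAlgebra.of 𝕂 G b * ahat ∧
    (CharZero 𝕂 → b ∉ Subgroup.normalizer (Subgroup.zpowers (a ^ k)) →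
      u⁻¹ * w⁻¹ * u * w ≠ 1) := by
  subst hahat
  have hα : of 𝕂 G a ^ n = 1 := by rw [← map_pow, ← ha, pow_orderOf_eq_one, map_one]
  have hpow : ((of 𝕂 G).toHomUnits (a ^ k) : MonoidAlgebra 𝕂 G) = of 𝕂 G a ^ k := by
    rw [MonoidHom.coe_toHomUnits, map_pow]
  have hpow_inv : (((of 𝕂 G).toHomUnits (a ^ k))⁻¹ : (MonoidAlgebra 𝕂 G)ˣ)
      = of 𝕂 G (a ^ (-(k : ℤ))) := by
    rw [← map_inv, MonoidHom.coe_toHomUnits, zpow_neg, zpow_natCast]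
  have hcomm := Units.val_commutator_eq_of_mul_eq_self _ u w _
    (hpow ▸ mul_geom_sum_mul_pow_of_pow_eq_one hα _ k)
    (sub_one_mul_mul_geom_sum_mul_self_of_pow_eq_one hα _) (hpow ▸ hu) hw
  rw [hpow_inv, mul_assoc (of 𝕂 G a - 1), one_sub_of_zpow_neg_mul, ← mul_assoc] at hcomm
  refine ⟨hcomm, fun _ hbk h1 ↦ ?_⟩
  rw [h1, Units.val_one, left_eq_add, sub_eq_add_neg 1, zpow_one_add] at hcomm
  have hfin : IsOfFinOrder a := orderOf_pos_iff.mp (by omega)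
  rcases conj_mem_zpowers_of_mul_geom_sum_eq_zero (by omega) hcomm with hc | hc
  · have hnorm := mem_normalizer_zpowers_of_conj_mem hfin (zpow_mem (mem_zpowers a) _) hc
    rw [zpow_neg, zpow_natCast, zpowers_inv] at hnorm
    exact hbk hnorm
  · exact hb (mem_normalizer_zpowers_of_conj_mem hfin (mem_zpowers a) hc)

theorem stmt_15 {𝕂 : Type*} [CommRing 𝕂] [IsDomain 𝕂]
    {G : Type*} [Group G] (a b : G) (n : ℕ) (hn : 2 ≤ n) (ha : orderOf a = n)
    (hA : ¬ (Subgroup.zpowers a).Normal)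
    (hb : b ∉ Subgroup.normalizer (Subgroup.zpowers a))
    (ahat : MonoidAlgebra 𝕂 G)
    (hahat : ahat = ∑ i ∈ Finset.range n, (MonoidAlgebra.of 𝕂 G a) ^ i)
    (k : ℕ) (hk1 : 1 ≤ k) (hkn : k < n)
    (w u : (MonoidAlgebra 𝕂 G)ˣ)
    (hw : (w : MonoidAlgebra 𝕂 G) = 1 + (MonoidAlgebra.of 𝕂 G a - 1) * MonoidAlgebra.of 𝕂 G b * ahat)
    (hu : (u : MonoidAlgebra 𝕂 G) = MonoidAlgebra.of 𝕂 G a ^ k + (MonoidAlgebra.of 𝕂 G a - 1) * MonoidAlgebra.of 𝕂 G b * ahat) :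
    ((u⁻¹ * w⁻¹ * u * w : (MonoidAlgebra 𝕂 G)ˣ) : MonoidAlgebra 𝕂 G)
        = 1 + (MonoidAlgebra.of 𝕂 G (a ^ (-(k : ℤ))) - MonoidAlgebra.of 𝕂 G (a ^ (1 - (k : ℤ)))
            + MonoidAlgebra.of 𝕂 G a - 1) * MonoidAlgebra.of 𝕂 G b * ahat ∧
    (CharZero 𝕂 → b ∉ Subgroup.normalizer (Subgroup.zpowers (a ^ k)) →
      u⁻¹ * w⁻¹ * u * w ≠ 1) :=
  stmt_15_general a b n hn ha hb ahat hahat k w u hw hu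
end

section
/- Let k be an integer with 1 ≤ k < n. In 𝕂G set x₊ = (a-1)(Δ_k(a) + bâ) = u_k - 1 and y₊ = (a-1)(Δ_k(a) + a^k bâ) = z_k - 1, where Δ_k(a) = Σ_{i=0}^{k-1} a^i, and for an integer m ≥ 1 set F_m(a) = Σ_{i=1}^{m} C(m,i)·Δ_k(a)^{i-1}(a-1)^{i-1}, where C(m,i) is the binomial coefficient. Then for every integer m ≥ 1: u_k^m = 1 + F_m(a)·x₊ and z_k^m = 1 + F_m(a)·y₊. -/
lemma aux_key {R : Type*} [Ring R] (e d C q : R)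
    (hCe : C * e = 0) (hde : d * e = q) :
    (1 + e * C) * (e * (d + (C + q * C))) = (e * (d + C)) * (1 + e * C) := by
  calc (1 + e * C) * (e * (d + (C + q * C)))
      = e * (d + (C + q * C)) + e * (C * e) * (d + (C + q * C)) := by noncomm_ring
    _ = e * (d + (C + q * C)) := by rw [hCe]; noncomm_ring
    _ = e * (d + C) + e * ((d * e) * C) + e * ((C * e) * C) := by rw [hde, hCe]; noncomm_ring
    _ = (e * (d + C)) * (1 + e * C) := by noncomm_ring

lemma aux_sq {R : Type*} [Ring R] (e d C : R) (hCe : C * e = 0) (hed : e * d = d * e) :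
    (e * (d + C)) * (e * (d + C)) = (d * e) * (e * (d + C)) := by
  calc (e * (d + C)) * (e * (d + C))
      = e * ((d * e) + (C * e)) * (d + C) := by noncomm_ring
    _ = (e * d) * (e * (d + C)) := by rw [hCe, add_zero]; noncomm_ring
    _ = (d * e) * (e * (d + C)) := by rw [hed]

lemma aux_pow {R : Type*} [Ring R] (c x : R) (hx : x * x = c * x) (m : ℕ) :
    (1 + x) ^ m = 1 + (∑ i ∈ Finset.Icc 1 m, (m.choose i : R) * c ^ (i - 1)) * x := by
  have hpow : ∀ i : ℕ, x ^ (i + 1) = c ^ i * x := by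
    intro i
    induction i with
    | zero => simp
    | succ j ih => rw [pow_succ, ih, mul_assoc, hx, ← mul_assoc, ← pow_succ]
  rw [add_comm (1 : R) x, (Commute.one_right x).add_pow, Finset.sum_range_succ']
  simp only [pow_zero, one_mul, Nat.choose_zero_right, Nat.cast_one, mul_one, one_pow]
  rw [add_comm]
  congr 1
  rw [Finset.sum_mul, ← Finset.Ico_add_one_right_eq_Icc, Finset.sum_Ico_eq_sum_range]
  apply Finset.sum_congr rfl
  intro i hi
  rw [hpow]
  have h1 : (1 + i) - 1 = i := by omega
  rw [h1, Nat.add_comm 1 i, mul_assoc, ← (Nat.cast_commute (m.choose (i+1)) x).eq, ← mul_assoc,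
    ← (Nat.cast_commute (m.choose (i+1)) (c ^ i)).eq, mul_assoc]

theorem stmt_18 {𝕂 : Type*} [CommRing 𝕂] [IsDomain 𝕂]
    {G : Type*} [Group G] (a b : G) (n : ℕ) (hn : 2 ≤ n) (ha : orderOf a = n)
    (hA : ¬ (Subgroup.zpowers a).Normal)
    (hb : b ∉ Subgroup.normalizer (Subgroup.zpowers a))
    (ahat : MonoidAlgebra 𝕂 G)
    (hahat : ahat = ∑ i ∈ Finset.range n, (MonoidAlgebra.of 𝕂 G a) ^ i)
    (k : ℕ) (hk1 : 1 ≤ k) (hkn : k < n)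
    (w u z : (MonoidAlgebra 𝕂 G)ˣ)
    (hw : (w : MonoidAlgebra 𝕂 G) = 1 + (MonoidAlgebra.of 𝕂 G a - 1) * MonoidAlgebra.of 𝕂 G b * ahat)
    (hu : (u : MonoidAlgebra 𝕂 G) = MonoidAlgebra.of 𝕂 G a ^ k + (MonoidAlgebra.of 𝕂 G a - 1) * MonoidAlgebra.of 𝕂 G b * ahat)
    (hz : z = w⁻¹ * u * w)
    (xp yp : MonoidAlgebra 𝕂 G)
    (hxp : xp = (MonoidAlgebra.of 𝕂 G a - 1) * ((∑ i ∈ Finset.range (k), (MonoidAlgebra.of 𝕂 G a) ^ i) + MonoidAlgebra.of 𝕂 G b * ahat))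
    (hyp : yp = (MonoidAlgebra.of 𝕂 G a - 1) *
        ((∑ i ∈ Finset.range (k), (MonoidAlgebra.of 𝕂 G a) ^ i) + MonoidAlgebra.of 𝕂 G a ^ k * MonoidAlgebra.of 𝕂 G b * ahat)) :
    xp = (u : MonoidAlgebra 𝕂 G) - 1 ∧
    yp = (z : MonoidAlgebra 𝕂 G) - 1 ∧
    (∀ m : ℕ, 1 ≤ m →
      ((u ^ m : (MonoidAlgebra 𝕂 G)ˣ) : MonoidAlgebra 𝕂 G) = 1 + (∑ i ∈ Finset.Icc 1 m, (Nat.choose m i : MonoidAlgebra 𝕂 G) * (∑ i ∈ Finset.range (k), (MonoidAlgebra.of 𝕂 G a) ^ i) ^ (i - 1) * (MonoidAlgebra.of 𝕂 G a - 1) ^ (i - 1)) * xp ∧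
      ((z ^ m : (MonoidAlgebra 𝕂 G)ˣ) : MonoidAlgebra 𝕂 G) = 1 + (∑ i ∈ Finset.Icc 1 m, (Nat.choose m i : MonoidAlgebra 𝕂 G) * (∑ i ∈ Finset.range (k), (MonoidAlgebra.of 𝕂 G a) ^ i) ^ (i - 1) * (MonoidAlgebra.of 𝕂 G a - 1) ^ (i - 1)) * yp) := by
  set A : MonoidAlgebra 𝕂 G := MonoidAlgebra.of 𝕂 G a with hAdef
  set B : MonoidAlgebra 𝕂 G := MonoidAlgebra.of 𝕂 G b with hBdef
  set e : MonoidAlgebra 𝕂 G := A - 1 with hedef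
  set δ : MonoidAlgebra 𝕂 G := ∑ i ∈ Finset.range k, A ^ i with hδdef
  have hAn : A ^ n = 1 := by
    rw [hAdef, ← map_pow, ← ha, pow_orderOf_eq_one, map_one]
  have h2 : ahat * e = 0 := by
    rw [hahat, hedef, geom_sum_mul, hAn, sub_self]
  have hCe : (B * ahat) * e = 0 := by rw [mul_assoc, h2, mul_zero]
  have hδe : δ * e = A ^ k - 1 := by rw [hδdef, hedef, geom_sum_mul]
  have heδ : e * δ = A ^ k - 1 := by rw [hδdef, hedef, mul_geom_sum]
  have hcomm : e * δ = δ * e := by rw [hδe, heδ]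
  -- xp = u - 1
  have hxpu : xp = (u : MonoidAlgebra 𝕂 G) - 1 := by
    rw [hxp, hu, mul_add, heδ]
    noncomm_ring
  refine ⟨hxpu, ?_⟩
  -- yp = z - 1
  have hC'eq : A ^ k * B * ahat = B * ahat + (A ^ k - 1) * (B * ahat) := by noncomm_ring
  have hwz : (z : MonoidAlgebra 𝕂 G) = ↑w⁻¹ * ↑u * ↑w := by rw [hz, Units.val_mul, Units.val_mul]
  have key : (w : MonoidAlgebra 𝕂 G) * yp = xp * (w : MonoidAlgebra 𝕂 G) := by
    rw [hw, hyp, hxp, hC'eq, mul_assoc e B ahat]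
    exact aux_key e δ (B * ahat) (A ^ k - 1) hCe hδe
  have h3 : (w : MonoidAlgebra 𝕂 G) * ((z : MonoidAlgebra 𝕂 G) - 1) = xp * (w : MonoidAlgebra 𝕂 G) := by
    rw [mul_sub, mul_one, hwz, hxpu, sub_mul, one_mul]
    congr 1
    calc (w : MonoidAlgebra 𝕂 G) * (↑w⁻¹ * ↑u * ↑w)
        = ((w : MonoidAlgebra 𝕂 G) * ↑w⁻¹) * (↑u * ↑w) := by noncomm_ring
      _ = ↑u * ↑w := by rw [Units.mul_inv, one_mul]
  have hypz : yp = (z : MonoidAlgebra 𝕂 G) - 1 := by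
    have := key.trans h3.symm
    exact (Units.mul_right_inj w).mp this
  refine ⟨hypz, ?_⟩
  -- powers
  have hu1 : (u : MonoidAlgebra 𝕂 G) = 1 + xp := by rw [hxpu]; noncomm_ring
  have hz1 : (z : MonoidAlgebra 𝕂 G) = 1 + yp := by rw [hypz]; noncomm_ring
  have hx2 : xp * xp = (δ * e) * xp := by
    rw [hxp]
    exact aux_sq e δ (B * ahat) hCe hcomm
  have hC2e : (A ^ k * B * ahat) * e = 0 := by rw [mul_assoc, h2, mul_zero]
  have hy2 : yp * yp = (δ * e) * yp := by
    rw [hyp]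
    exact aux_sq e δ (A ^ k * B * ahat) hC2e hcomm
  have hF : ∀ m : ℕ, (∑ i ∈ Finset.Icc 1 m, (Nat.choose m i : MonoidAlgebra 𝕂 G) * δ ^ (i - 1) * e ^ (i - 1))
      = ∑ i ∈ Finset.Icc 1 m, (Nat.choose m i : MonoidAlgebra 𝕂 G) * (δ * e) ^ (i - 1) := by
    intro m
    apply Finset.sum_congr rfl
    intro i _
    rw [mul_assoc, (Commute.mul_pow (by exact hcomm.symm) (i - 1))]
  intro m hm
  constructor
  · rw [Units.val_pow_eq_pow_val, hu1, aux_pow (δ * e) xp hx2 m, hF]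
  · rw [Units.val_pow_eq_pow_val, hz1, aux_pow (δ * e) yp hy2 m, hF]
end
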